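/- Let q, a ∈ ℂ with q ≠ 0, qⁿ ≠ 1 for nonzero n. Then lim_{a→0} aⁿ H_n((2a)^{−1} x; a | q) = xⁿ, where H_n(½x; a | q) = a^{−n} ₃φ₂(q^{−n}, az, a z^{−1}; 0, 0; q, q) with x = z + z^{−1} is the continuous big q-Hermite polynomial. -/

import Mathlib

open Finset Filter

/-- q-shifted factorial (a;q)_k -/
noncomputable def qPoch (a q : ℂ) (k : ℕ) : ℂ := ∏ i ∈ range k, (1 - a * q ^ i)

/-- continuous big q-Hermite polynomial H_n(x/2; a | q) as a function of x = z + z⁻¹,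
via the ₃φ₂ representation with both lower parameters 0, where
(az;q)_k (az⁻¹;q)_k = ∏_{i<k} (1 - a q^i x + a² q^{2i}). -/
noncomputable def bigqHermite (q a : ℂ) (n : ℕ) (x : ℂ) : ℂ :=
  (a⁻¹) ^ n *
  ∑ k ∈ range (n + 1),
    qPoch (q ^ (-(n : ℤ))) q k / qPoch q q k *
    (∏ i ∈ range k, (1 - a * q ^ i * x + a ^ 2 * q ^ (2 * i))) * q ^ k

/-!
Rescaling `x ↦ a⁻¹ x` turns each factor `1 - a qⁱ x + a² q²ⁱ` of the ₃φ₂ series into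
`1 - qⁱ x + a² q²ⁱ`, and the prefactor `aⁿ` cancels `a⁻ⁿ`, so `aⁿ Hₙ(x/(2a); a | q)` is a
polynomial in `a`. Its value at `a = 0` is `₂φ₁(q⁻ⁿ, x; 0; q, q)`, which equals `xⁿ`: with
`eₖ = (p;q)ₖ/(q;q)ₖ`, the relations `x qᵏ (x;q)ₖ = (x;q)ₖ - (x;q)ₖ₊₁` and
`qᵏ⁺¹ e_{k+1}(p/q) = e_{k+1}(p) - eₖ(p)` make the `n`-th sum telescope into `x` times the
`(n-1)`-st.
-/

section QPochhammer

variable {q : ℂ}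

lemma qPoch_zero (a q : ℂ) : qPoch a q 0 = 1 := by simp [qPoch]

lemma qPoch_succ (a q : ℂ) (k : ℕ) : qPoch a q (k + 1) = qPoch a q k * (1 - a * q ^ k) :=
  prod_range_succ _ _

lemma qPoch_succ' (a q : ℂ) (k : ℕ) : qPoch a q (k + 1) = (1 - a) * qPoch (a * q) q k := by
  simp only [qPoch, prod_range_succ', pow_zero, mul_one, pow_succ, mul_assoc, mul_comm]

lemma qPoch_self_ne_zero (hq : ¬IsOfFinOrder q) (k : ℕ) : qPoch q q k ≠ 0 := by
  refine prod_ne_zero_iff.mpr fun i _ h =>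
    hq (isOfFinOrder_iff_pow_eq_one.mpr ⟨i + 1, i.succ_pos, ?_⟩)
  linear_combination (pow_succ' q i).symm - h

lemma qPoch_zpow_neg_succ (hq : q ≠ 0) (n : ℕ) : qPoch (q ^ (-(n : ℤ))) q (n + 1) = 0 := by
  refine prod_eq_zero (self_mem_range_succ n) ?_
  rw [zpow_neg, zpow_natCast, inv_mul_cancel₀ (pow_ne_zero n hq), sub_self]

lemma mul_pow_mul_qPoch (x q : ℂ) (k : ℕ) :
    x * q ^ k * qPoch x q k = qPoch x q k - qPoch x q (k + 1) := by
  rw [qPoch_succ]; ring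

lemma pow_succ_mul_qPoch_mul_inv (hq : q ≠ 0) (p : ℂ) (k : ℕ) :
    q ^ (k + 1) * qPoch (p * q⁻¹) q (k + 1)
      = qPoch p q (k + 1) - qPoch p q k * (1 - q ^ (k + 1)) := by
  rw [qPoch_succ', qPoch_succ, inv_mul_cancel_right₀ hq]
  field_simp
  ring

lemma qPoch_div_qPoch_mul_inv_succ (hq : q ≠ 0) (hq1 : ¬IsOfFinOrder q) (p : ℂ) (k : ℕ) :
    qPoch (p * q⁻¹) q (k + 1) / qPoch q q (k + 1) * q ^ (k + 1)
      = qPoch p q (k + 1) / qPoch q q (k + 1) - qPoch p q k / qPoch q q k := by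
  have hk := qPoch_self_ne_zero hq1 k
  have hk' := qPoch_self_ne_zero hq1 (k + 1)
  rw [qPoch_succ q q k, ← pow_succ'] at hk' ⊢
  have hsub : 1 - q ^ (k + 1) ≠ 0 := right_ne_zero_of_mul hk'
  have h := pow_succ_mul_qPoch_mul_inv hq p k
  rw [← div_eq_mul_inv] at h ⊢
  field_simp
  linear_combination h

/-- `₂φ₁(q⁻ⁿ, x; 0; q, q) = xⁿ`. -/
theorem sum_qPoch_zpow_neg_mul_qPoch (hq : q ≠ 0) (hq1 : ¬IsOfFinOrder q) (n : ℕ) (x : ℂ) :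
    ∑ k ∈ range (n + 1), qPoch (q ^ (-(n : ℤ))) q k / qPoch q q k * qPoch x q k * q ^ k
      = x ^ n := by
  induction n with
  | zero => simp [qPoch_zero]
  | succ n ih =>
    set e : ℕ → ℂ := fun k => qPoch (q ^ (-(n : ℤ))) q k / qPoch q q k
    have hp : q ^ (-((n + 1 : ℕ) : ℤ)) = q ^ (-(n : ℤ)) * q⁻¹ := by
      rw [← zpow_neg_one, ← zpow_add₀ hq]; push_cast; ring_nf
    have htop : e (n + 1) * qPoch x q (n + 1) = 0 := by
      simp only [e, qPoch_zpow_neg_succ hq, zero_div, zero_mul]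
    have hshift : ∑ k ∈ range (n + 1), e k * qPoch x q k
        = 1 + ∑ k ∈ range (n + 1), e (k + 1) * qPoch x q (k + 1) := by
      rw [← add_zero (∑ k ∈ range (n + 1), _), ← htop, ← sum_range_succ, sum_range_succ']
      simp [e, qPoch_zero, add_comm]
    calc ∑ k ∈ range (n + 1 + 1),
          qPoch (q ^ (-((n + 1 : ℕ) : ℤ))) q k / qPoch q q k * qPoch x q k * q ^ k
        = 1 + ∑ k ∈ range (n + 1), (e (k + 1) - e k) * qPoch x q (k + 1) := by
          rw [sum_range_succ', hp, add_comm]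
          simp only [qPoch_zero, div_one, pow_zero, mul_one, e,
            ← qPoch_div_qPoch_mul_inv_succ hq hq1]
          congr 1
          exact sum_congr rfl fun k _ => by ring
      _ = ∑ k ∈ range (n + 1), e k * (qPoch x q k - qPoch x q (k + 1)) := by
          simp only [sub_mul, mul_sub, sum_sub_distrib, hshift]
          ring
      _ = x * ∑ k ∈ range (n + 1), e k * qPoch x q k * q ^ k := by
          rw [mul_sum]
          exact sum_congr rfl fun k _ => by rw [← mul_pow_mul_qPoch]; ring
      _ = x ^ (n + 1) := by rw [ih, pow_succ']

end QPochhammer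

/-- `aⁿ Hₙ(x/(2a); a | q)`, extended polynomially to `a = 0`. -/
noncomputable def rescaledBigqHermite (q : ℂ) (n : ℕ) (x a : ℂ) : ℂ :=
  ∑ k ∈ range (n + 1),
    qPoch (q ^ (-(n : ℤ))) q k / qPoch q q k *
    (∏ i ∈ range k, (1 - q ^ i * x + a ^ 2 * q ^ (2 * i))) * q ^ k

lemma pow_mul_bigqHermite_inv_mul {a : ℂ} (ha : a ≠ 0) (q : ℂ) (n : ℕ) (x : ℂ) :
    a ^ n * bigqHermite q a n (a⁻¹ * x) = rescaledBigqHermite q n x a := by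
  rw [bigqHermite, ← mul_assoc, ← mul_pow, mul_inv_cancel₀ ha, one_pow, one_mul]
  refine sum_congr rfl fun k _ => ?_
  congr 2
  refine prod_congr rfl fun i _ => ?_
  rw [show a * q ^ i * (a⁻¹ * x) = q ^ i * x by field_simp]

lemma continuous_rescaledBigqHermite (q : ℂ) (n : ℕ) (x : ℂ) :
    Continuous (rescaledBigqHermite q n x) := by
  unfold rescaledBigqHermite
  fun_prop

lemma rescaledBigqHermite_zero {q : ℂ} (hq : q ≠ 0) (hq1 : ¬IsOfFinOrder q) (n : ℕ) (x : ℂ) :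
    rescaledBigqHermite q n x 0 = x ^ n := by
  rw [← sum_qPoch_zpow_neg_mul_qPoch hq hq1]
  refine sum_congr rfl fun k _ => ?_
  simp [qPoch, mul_comm x]

theorem bigqHermite_to_monomial (q : ℂ)
    (hq : q ≠ 0) (hq1 : ∀ n : ℤ, n ≠ 0 → q ^ n ≠ 1)
    (n : ℕ) (x : ℂ) :
    Tendsto (fun a : ℂ => a ^ n * bigqHermite q a n (a⁻¹ * x))
      (nhdsWithin 0 {0}ᶜ) (nhds (x ^ n)) := by
  have hfin : ¬IsOfFinOrder q := fun h => by
    obtain ⟨k, hk, hqk⟩ := isOfFinOrder_iff_pow_eq_one.mp h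
    exact hq1 k (by exact_mod_cast hk.ne') (by rwa [zpow_natCast])
  have hlim : Tendsto (rescaledBigqHermite q n x) (nhdsWithin 0 {0}ᶜ) (nhds (x ^ n)) := by
    rw [← rescaledBigqHermite_zero hq hfin n x]
    exact (continuous_rescaledBigqHermite q n x).continuousWithinAt
  refine hlim.congr' ?_
  filter_upwards [self_mem_nhdsWithin] with a ha
  exact (pow_mul_bigqHermite_inv_mul ha q n x).symm
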